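/- Every 18-vertex C4-free Halin graph H satisfies e(H) ≤ 28. -/

import Mathlib

open SimpleGraph

/-- Degree of a vertex as the `ncard` of its neighbour set. -/
noncomputable def ncDeg {V : Type*} (G : SimpleGraph V) (v : V) : ℕ :=
  (G.neighborSet v).ncard

/-- A leaf is a vertex of degree one. -/
def IsLeaf {V : Type*} (G : SimpleGraph V) (v : V) : Prop :=
  ncDeg G v = 1

/-- A Halin graph, presented by its characteristic tree `T` and outer cycle `C`.
The underlying graph is `T ⊔ C`.  The outer cycle is a `2`-regular connected graph
whose support is exactly the set of leaves of `T`, every non-leaf of `T` has degree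
at least three, and the cycle is compatible with a planar embedding: for every edge
`uv` of `T`, the leaves lying in each component of `T - uv` are consecutive on the
cycle, i.e. they induce a connected subgraph of the cycle. -/
structure HalinGraph (V : Type*) [Fintype V] : Type _ where
  /-- the characteristic tree -/
  T : SimpleGraph V
  /-- the outer cycle -/
  C : SimpleGraph V
  tree_isTree : T.IsTree
  four_le_card : 4 ≤ Fintype.card V
  nonleaf_degree : ∀ v : V, ¬ IsLeaf T v → 3 ≤ ncDeg T v
  support_C : C.support = {v : V | IsLeaf T v}
  two_regular : ∀ v ∈ C.support, ncDeg C v = 2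
  cycle_connected : (C.induce C.support).Connected
  planar : ∀ u v : V, T.Adj u v →
    (C.induce {x : V | IsLeaf T x ∧ (T.deleteEdges {s(u, v)}).Reachable u x}).Connected

/-- The Halin graph itself: the (edge-disjoint) union of the tree and the outer cycle. -/
def HalinGraph.graph {V : Type*} [Fintype V] (H : HalinGraph V) : SimpleGraph V :=
  H.T ⊔ H.C

/-- Number of edges of a graph. -/
noncomputable def eCount {V : Type*} (G : SimpleGraph V) : ℕ :=
  G.edgeSet.ncard

/-- A graph is `C₄`-free iff it contains no cycle of length `4`. -/
def C4Free {V : Type*} (G : SimpleGraph V) : Prop :=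
  ∀ (v : V) (w : G.Walk v v), w.IsCycle → w.length ≠ 4

/-- A semi-branching vertex of the characteristic tree: a non-leaf with at least one
leaf neighbour and at least two non-leaf neighbours. -/
def SemiBranching {V : Type*} (T : SimpleGraph V) (v : V) : Prop :=
  ¬ IsLeaf T v ∧ (∃ x, T.Adj v x ∧ IsLeaf T x) ∧
    ∃ x y : V, x ≠ y ∧ T.Adj v x ∧ T.Adj v y ∧ ¬ IsLeaf T x ∧ ¬ IsLeaf T y

/-! The tree has `n - 1` edges and the cycle has one edge per leaf, so it suffices to show
`3 L ≤ 2 (n - 1)` for the number `L` of leaves. Count the pairs `(e, f)` of a tree edge `e` and a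
cycle edge `f` such that `e` lies on the tree path between the ends of `f`. By planarity the
leaves on either side of `e` form an arc of the cycle, so each `e` is counted at most twice.
If the ends of `f` have a common neighbour in the tree, their path has length `2`; otherwise it
has length at least `4`, as a path of length `3` would close a `4`-cycle with `f`. By
`C₄`-freeness the cycle edges of the first kind form a matching, so there are at most `L / 2` of
them, and the count is at least `3 L`. -/

open Finset
open scoped Classical

section

variable {V : Type*} {G : SimpleGraph V}

lemma ncDeg_eq_degree (v : V) [Fintype (G.neighborSet v)] :
    ncDeg G v = G.degree v := by
  rw [ncDeg, Set.ncard_eq_toFinset_card', ← card_neighborFinset_eq_degree]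
  rfl

lemma IsLeaf.subsingleton_neighborSet {x : V} (hx : IsLeaf G x) :
    (G.neighborSet x).Subsingleton := by
  obtain ⟨c, hc⟩ := Set.ncard_eq_one.mp hx
  exact hc ▸ Set.subsingleton_singleton

lemma IsLeaf.eq_of_adj {x a b : V} (hx : IsLeaf G x) (ha : G.Adj x a) (hb : G.Adj x b) :
    a = b :=
  hx.subsingleton_neighborSet ha hb

lemma C4Free.eq_or_eq_of_adj (hG : C4Free G) {a b c d : V} (hab : G.Adj a b) (hbc : G.Adj b c)
    (hcd : G.Adj c d) (hda : G.Adj d a) : a = c ∨ b = d := by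
  by_contra! h
  refine hG a (.cons hab (.cons hbc (.cons hcd (.cons hda .nil)))) ?_ rfl
  have := hab.ne; have := hbc.ne; have := hcd.ne; have := hda.ne
  simp only [Walk.cons_isCycle_iff, Walk.isPath_def, Walk.support_cons, Walk.support_nil,
    Walk.edges_cons, Walk.edges_nil, List.nodup_cons, List.mem_cons, Sym2.eq_iff]
  grind

namespace SimpleGraph

lemma Connected.not_adj_of_isLeaf [Fintype V] (hG : G.Connected) (hV : 2 < Fintype.card V)
    {x y : V} (hx : IsLeaf G x) (hy : IsLeaf G y) : ¬ G.Adj x y := by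
  intro hxy
  obtain ⟨z, -, hz⟩ := exists_mem_notMem_of_card_lt_card (s := {x, y}) (t := univ)
    ((card_le_two).trans_lt (by simpa using hV))
  simp only [mem_insert, mem_singleton, not_or] at hz
  let p := (hG x z).some.bypass
  have hnil : ¬ p.Nil := Walk.not_nil_of_ne (Ne.symm hz.1)
  have hsnd : p.getVert 1 = y := hx.eq_of_adj (p.adj_snd hnil) hxy
  exact (Walk.bypass_isPath _).isTrail.not_mem_support_of_subsingleton_neighborSet hxy.ne'
    (Ne.symm hz.2) hy.subsingleton_neighborSet (hsnd ▸ p.getVert_mem_support 1)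

lemma reachable_deleteEdges_or {u v w : V} (h : G.Reachable u w) :
    (G.deleteEdges {s(u, v)}).Reachable u w ∨ (G.deleteEdges {s(u, v)}).Reachable v w := by
  rw [reachable_iff_reflTransGen] at h
  induction h with
  | refl => exact .inl .rfl
  | @tail b c _ hbc ih =>
    by_cases he : s(b, c) = s(u, v)
    · rcases Sym2.eq_iff.mp he with ⟨-, rfl⟩ | ⟨-, rfl⟩
      exacts [.inr .rfl, .inl .rfl]
    · have hadj : (G.deleteEdges {s(u, v)}).Adj b c := by simp [hbc, he]
      exact ih.imp (·.trans hadj.reachable) (·.trans hadj.reachable)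

def Separates (G : SimpleGraph V) (e : Sym2 V) : Sym2 V → Prop :=
  Sym2.lift ⟨fun x y => ¬ (G.deleteEdges {e}).Reachable x y, fun _ _ => by
    dsimp only
    rw [reachable_comm]⟩

@[simp]
lemma separates_mk {e : Sym2 V} {x y : V} :
    G.Separates e s(x, y) ↔ ¬ (G.deleteEdges {e}).Reachable x y :=
  Iff.rfl

def HasCommonNeighbor (G : SimpleGraph V) : Sym2 V → Prop :=
  Sym2.lift ⟨fun x y => (G.commonNeighbors x y).Nonempty, fun _ _ => by
    dsimp only
    rw [commonNeighbors_symm]⟩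

lemma IsAcyclic.separates_of_mem_edges (hG : G.IsAcyclic) {x y : V} {p : G.Walk x y}
    (hp : p.IsPath) {e : Sym2 V} (he : e ∈ p.edges) : G.Separates e s(x, y) := by
  induction e using Sym2.ind with
  | h u v =>
    rw [separates_mk, reachable_deleteEdges_iff_exists_walk]
    rintro ⟨q, hq⟩
    have hqp : q.bypass = p :=
      congr(($((hG.subsingleton_path x y).elim ⟨q.bypass, q.bypass_isPath⟩ ⟨p, hp⟩)).val)
    exact hq (q.edges_bypass_subset_edges (hqp ▸ he))

lemma IsAcyclic.dist_le_card_separates [Fintype V] (hG : G.IsAcyclic) (x y : V) :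
    G.dist x y ≤ #{e ∈ G.edgeFinset | G.Separates e s(x, y)} := by
  by_cases h : G.Reachable x y
  · obtain ⟨p, hp⟩ := h.exists_walk_length_eq_dist
    have hpath := p.isPath_of_length_eq_dist hp
    calc G.dist x y = #p.edges.toFinset := by
          rw [List.toFinset_card_of_nodup hpath.edges_nodup, p.length_edges, hp]
      _ ≤ _ := card_le_card fun e he => by
          rw [List.mem_toFinset] at he
          exact mem_filter.mpr
            ⟨mem_edgeFinset.mpr (p.edges_subset_edgeSet he), hG.separates_of_mem_edges hpath he⟩
  · simp [dist_eq_zero_of_not_reachable h]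

lemma card_dart_fst_mem_snd_notMem_le_two [Fintype V] {A : Set V} [DecidablePred (· ∈ A)]
    (hA : (G.induce A).Connected) (hdeg : ∀ a ∈ A, G.degree a = 2) :
    #{d : G.Dart | d.fst ∈ A ∧ d.snd ∉ A} ≤ 2 := by
  have hout : #{d : G.Dart | d.fst ∈ A} = 2 * #A.toFinset := by
    rw [card_eq_sum_card_fiberwise (f := fun d : G.Dart => d.fst) (t := A.toFinset)
      fun d hd => by simpa using hd, mul_comm, ← smul_eq_mul, ← sum_const]
    refine sum_congr rfl fun a ha => ?_
    rw [← hdeg a (Set.mem_toFinset.mp ha), ← dart_fst_fiber_card_eq_degree, filter_filter]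
    congr 1
    ext d
    simp only [mem_filter, mem_univ, true_and, and_iff_right_iff_imp]
    rintro rfl
    simpa using ha
  have hin : 2 * (#A.toFinset - 1) ≤ #{d : G.Dart | d.fst ∈ A ∧ d.snd ∈ A} := by
    have hconn := hA.card_vert_le_card_edgeSet_add_one
    rw [Nat.card_eq_fintype_card, ← Set.toFinset_card, Nat.card_eq_fintype_card,
      ← edgeFinset_card] at hconn
    have hmap : Fintype.card (G.induce A).Dart ≤ #{d : G.Dart | d.fst ∈ A ∧ d.snd ∈ A} := by
      rw [← card_univ]
      refine card_le_card_of_injOn (Embedding.induce A).toHom.mapDart (fun d _ => by simp) ?_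
      intro d₁ _ d₂ _ h
      exact Dart.ext _ _ (Prod.ext (Subtype.ext congr(($h).fst)) (Subtype.ext congr(($h).snd)))
    have := (G.induce A).dart_card_eq_twice_card_edges
    omega
  have hsplit := card_filter_add_card_filter_not (s := {d : G.Dart | d.fst ∈ A}) (·.snd ∈ A)
  simp only [filter_filter] at hsplit
  omega

end SimpleGraph

end

namespace HalinGraph

variable {V : Type*} [Fintype V] (H : HalinGraph V)

noncomputable def leaves : Finset V := {v | IsLeaf H.T v}

@[simp]
lemma mem_leaves {v : V} : v ∈ H.leaves ↔ IsLeaf H.T v := by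
  simp [leaves]

lemma isLeaf_of_adj_C {x y : V} (h : H.C.Adj x y) : IsLeaf H.T x := by
  have hx : x ∈ H.C.support := ⟨y, h⟩
  rwa [H.support_C] at hx

lemma not_adj_T_of_isLeaf {x y : V} (hx : IsLeaf H.T x) (hy : IsLeaf H.T y) : ¬ H.T.Adj x y :=
  H.tree_isTree.connected.not_adj_of_isLeaf (by have := H.four_le_card; omega) hx hy

lemma not_adj_T_of_adj_C {x y : V} (h : H.C.Adj x y) : ¬ H.T.Adj x y :=
  H.not_adj_T_of_isLeaf (H.isLeaf_of_adj_C h) (H.isLeaf_of_adj_C h.symm)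

lemma disjoint_edgeSet : Disjoint H.T.edgeSet H.C.edgeSet := by
  refine Set.disjoint_left.mpr fun e hT hC => ?_
  induction e using Sym2.ind with
  | h x y => exact H.not_adj_T_of_adj_C hC hT

lemma degree_C (v : V) : H.C.degree v = if IsLeaf H.T v then 2 else 0 := by
  split_ifs with hv
  · rw [← ncDeg_eq_degree]
    exact H.two_regular v (by rw [H.support_C]; exact hv)
  · rw [degree_eq_zero_iff_notMem_support, H.support_C]
    exact hv

lemma card_edgeFinset_C : #H.C.edgeFinset = #H.leaves := by
  have := H.C.sum_degrees_eq_twice_card_edges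
  simp only [degree_C, sum_ite, sum_const, smul_eq_mul, mul_zero, add_zero] at this
  rw [leaves]
  omega

lemma eCount_graph : eCount H.graph = Fintype.card V - 1 + #H.leaves := by
  have hT := H.tree_isTree.card_edgeFinset
  rw [eCount, graph, edgeSet_sup, Set.ncard_union_eq H.disjoint_edgeSet, ← coe_edgeFinset,
    ← coe_edgeFinset, Set.ncard_coe_finset, Set.ncard_coe_finset, card_edgeFinset_C]
  omega

lemma two_le_dist {x y : V} (h : H.C.Adj x y) : 2 ≤ H.T.dist x y := by
  by_contra! hlt
  interval_cases hd : H.T.dist x y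
  · exact h.ne (H.tree_isTree.connected.dist_eq_zero_iff.mp hd)
  · exact H.not_adj_T_of_adj_C h (dist_eq_one_iff_adj.mp hd)

lemma four_le_dist (hfree : C4Free H.graph) {x y : V} (h : H.C.Adj x y)
    (hxy : ¬ (H.T.commonNeighbors x y).Nonempty) : 4 ≤ H.T.dist x y := by
  obtain ⟨p, hp⟩ := H.tree_isTree.connected.exists_walk_length_eq_dist x y
  have h2 := H.two_le_dist h
  by_contra! hlt
  have hxa := p.adj_getVert_succ (i := 0) (by omega)
  have hab := p.adj_getVert_succ (i := 1) (by omega)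
  interval_cases hd : H.T.dist x y
  · rw [p.getVert_of_length_le (i := 1 + 1) (by omega)] at hab
    exact hxy ⟨p.getVert 1, by simpa using hxa, hab.symm⟩
  · have hby := p.adj_getVert_succ (i := 2) (by omega)
    rw [p.getVert_of_length_le (i := 2 + 1) (by omega)] at hby
    simp only [Walk.getVert_zero, zero_add] at hxa
    rcases hfree.eq_or_eq_of_adj (G := H.graph) (.inl hxa) (.inl hab) (.inl hby) (.inr h.symm)
      with hxb | hay
    · exact H.not_adj_T_of_adj_C h (hxb ▸ hby)
    · exact H.not_adj_T_of_adj_C h (hay ▸ hxa)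

lemma two_mul_card_hasCommonNeighbor_le (hfree : C4Free H.graph) :
    2 * #{f ∈ H.C.edgeFinset | H.T.HasCommonNeighbor f} ≤ #H.leaves := by
  suffices h : #{f ∈ H.C.edgeFinset | H.T.HasCommonNeighbor f} * 2 ≤ #H.leaves * 1 by omega
  refine card_mul_le_card_mul (fun f v => v ∈ f) (fun f hf => ?_) (fun v hv => ?_)
  · induction f using Sym2.ind with
    | h x y =>
      have hC : H.C.Adj x y := mem_edgeFinset.mp (mem_filter.mp hf).1
      calc 2 = #{x, y} := (card_pair hC.ne).symm
        _ ≤ _ := card_le_card fun z hz => by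
          rcases mem_insert.mp hz with rfl | hz
          · simp [H.isLeaf_of_adj_C hC]
          · rw [mem_singleton.mp hz]
            simp [H.isLeaf_of_adj_C hC.symm]
  · refine card_le_one.mpr fun f₁ hf₁ f₂ hf₂ => ?_
    simp only [mem_bipartiteBelow, mem_filter, mem_edgeFinset] at hf₁ hf₂
    obtain ⟨⟨hC₁, hN₁⟩, hv₁⟩ := hf₁
    obtain ⟨⟨hC₂, hN₂⟩, hv₂⟩ := hf₂
    obtain ⟨y₁, rfl⟩ := Sym2.mem_iff_exists.mp hv₁
    obtain ⟨y₂, rfl⟩ := Sym2.mem_iff_exists.mp hv₂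
    obtain ⟨a, hva, hy₁a⟩ := hN₁
    obtain ⟨a₂, hva₂, hy₂a₂⟩ := hN₂
    obtain rfl : a = a₂ := (H.mem_leaves.mp hv).eq_of_adj hva hva₂
    rcases hfree.eq_or_eq_of_adj (G := H.graph) (.inl hy₁a.symm) (.inr hC₁.symm) (.inr hC₂)
      (.inl hy₂a₂) with h | rfl
    · exact absurd h hva.ne'
    · rfl

lemma card_separates_le_two {u v : V} (huv : H.T.Adj u v) :
    #{f ∈ H.C.edgeFinset | H.T.Separates s(u, v) f} ≤ 2 := by
  set A := {x | IsLeaf H.T x ∧ (H.T.deleteEdges {s(u, v)}).Reachable u x}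
  refine (card_le_card_of_surjOn Dart.edge ?_).trans
    (card_dart_fst_mem_snd_notMem_le_two (H.planar u v huv) fun a ha => ?_)
  · intro f hf
    induction f using Sym2.ind with
    | h x y =>
      simp only [coe_filter, mem_edgeFinset] at hf
      obtain ⟨hC, hsep⟩ := hf
      have hconn := H.tree_isTree.connected
      rcases reachable_deleteEdges_or (v := v) (hconn u x) with hux | hvx
      · refine ⟨⟨(x, y), hC⟩, mem_filter.mpr ⟨mem_univ _, ?_⟩, rfl⟩
        exact ⟨⟨H.isLeaf_of_adj_C hC, hux⟩, fun hy => hsep (hux.symm.trans hy.2)⟩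
      · rcases reachable_deleteEdges_or (v := v) (hconn u y) with huy | hvy
        · refine ⟨⟨(y, x), hC.symm⟩, mem_filter.mpr ⟨mem_univ _, ?_⟩, Sym2.eq_swap⟩
          exact ⟨⟨H.isLeaf_of_adj_C hC.symm, huy⟩, fun hx => hsep (hx.2.symm.trans huy)⟩
        · exact absurd (hvx.symm.trans hvy) hsep
  · rw [← ncDeg_eq_degree]
    exact H.two_regular a (by rw [H.support_C]; exact ha.1)

lemma le_card_separates (hfree : C4Free H.graph) {f : Sym2 V} (hf : f ∈ H.C.edgeFinset) :
    (if H.T.HasCommonNeighbor f then 2 else 4) ≤ #{e ∈ H.T.edgeFinset | H.T.Separates e f} := by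
  induction f using Sym2.ind with
  | h x y =>
    have hC : H.C.Adj x y := mem_edgeFinset.mp hf
    refine le_trans ?_ (H.tree_isTree.isAcyclic.dist_le_card_separates x y)
    split_ifs with h
    exacts [H.two_le_dist hC, H.four_le_dist hfree hC h]

theorem three_mul_card_leaves_le (hfree : C4Free H.graph) :
    3 * #H.leaves ≤ 2 * (Fintype.card V - 1) := by
  have hmatch := H.two_mul_card_hasCommonNeighbor_le hfree
  have hsplit : #{f ∈ H.C.edgeFinset | H.T.HasCommonNeighbor f} +
      #{f ∈ H.C.edgeFinset | ¬ H.T.HasCommonNeighbor f} = #H.C.edgeFinset :=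
    card_filter_add_card_filter_not _
  have hsum : ∑ f ∈ H.C.edgeFinset, (if H.T.HasCommonNeighbor f then 2 else 4) =
      #{f ∈ H.C.edgeFinset | H.T.HasCommonNeighbor f} * 2 +
        #{f ∈ H.C.edgeFinset | ¬ H.T.HasCommonNeighbor f} * 4 := by
    rw [sum_ite, sum_const, sum_const, smul_eq_mul, smul_eq_mul]
  have hC := H.card_edgeFinset_C
  have hT := H.tree_isTree.card_edgeFinset
  calc 3 * #H.leaves ≤ ∑ f ∈ H.C.edgeFinset, (if H.T.HasCommonNeighbor f then 2 else 4) := by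
        rw [hsum]
        omega
    _ ≤ ∑ f ∈ H.C.edgeFinset, #{e ∈ H.T.edgeFinset | H.T.Separates e f} :=
        sum_le_sum fun f hf => H.le_card_separates hfree hf
    _ = ∑ e ∈ H.T.edgeFinset, #{f ∈ H.C.edgeFinset | H.T.Separates e f} :=
        sum_card_bipartiteAbove_eq_sum_card_bipartiteBelow fun f e => H.T.Separates e f
    _ ≤ ∑ e ∈ H.T.edgeFinset, 2 := sum_le_sum fun e he => by
        induction e using Sym2.ind with
        | h u v => exact H.card_separates_le_two (mem_edgeFinset.mp he)
    _ = 2 * (Fintype.card V - 1) := by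
        rw [sum_const, smul_eq_mul]
        omega

end HalinGraph

/-- Every `18`-vertex `C₄`-free Halin graph has at most `28` edges. -/
theorem halin_eighteen {V : Type*} [Fintype V] (hcard : Fintype.card V = 18)
    (H : HalinGraph V) (hfree : C4Free H.graph) :
    eCount H.graph ≤ 28 := by
  have hleaves := H.three_mul_card_leaves_le hfree
  rw [hcard] at hleaves
  rw [H.eCount_graph, hcard]
  omega
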